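/- arXiv:1801.07220 — 4 statements merged into one kernel-verified Lean document; each statement's English description precedes it below -/
import Mathlib

section
/- Let Z be a density on a probability space (Ω, 𝓕, P). Then the Rényi entropy is nondecreasing in its order: for all q₁, q₂ ∈ ℝ with q₁ ≤ q₂ such that H_{q₁}(Z) and H_{q₂}(Z) are well defined and finite, one has H_{q₁}(Z) ≤ H_{q₂}(Z). -/
open MeasureTheory Real Filter

noncomputable section

variable {Ω : Type*} [MeasurableSpace Ω]

/-- `Z` is a probability density with respect to `P`. -/
def IsDensity (P : Measure Ω) (Z : Ω → ℝ) : Prop :=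
  Integrable Z P ∧ 0 ≤ᵐ[P] Z ∧ ∫ ω, Z ω ∂P = 1

/-- The Rényi entropy of order `q` of a density `Z`. -/
def renyiEntropy (P : Measure Ω) (Z : Ω → ℝ) (q : ℝ) : ℝ :=
  if q = 0 then -Real.log (P {ω | 0 < Z ω}).toReal
  else if q = 1 then ∫ ω, Z ω * Real.log (Z ω) ∂P
  else (q - 1)⁻¹ * Real.log (∫ ω, Z ω ^ q ∂P)

/-- The Rényi entropy of order `q` of `Z` is well defined and finite:
the defining expectation is finite, and for negative orders `Z > 0` a.s. -/
def RenyiFinite (P : Measure Ω) (Z : Ω → ℝ) (q : ℝ) : Prop :=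
  (q = 1 → Integrable (fun ω => Z ω * Real.log (Z ω)) P) ∧
  (q ≠ 0 → q ≠ 1 → Integrable (fun ω => Z ω ^ q) P) ∧
  (q < 0 → ∀ᵐ ω ∂P, 0 < Z ω)


/-!
Under the size-biased measure `Q = Z • P`, the Rényi entropy of order `q` is the logarithm of the
power mean of order `q - 1` of `Z`: `∫ Z ^ q ∂P = ∫ Z ^ (q - 1) ∂Q` for `q ≠ 0`, the order `0`
matches because `Z * Z⁻¹` is the indicator of `{Z > 0}`, and the order `1` gives the geometric mean
`exp (∫ log Z ∂Q)`. Power means increase with the order, by Jensen's inequality for `x ↦ x ^ p`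
(`p ∉ (0, 1)`) and for `log`. These are convex or concave only on the open half-line, outside
the scope of Mathlib's closed-domain Jensen, so the inequality is obtained by integrating a tangent
line.
-/

section PowerMean

variable {α : Type*} [MeasurableSpace α] {μ : Measure α}

lemma integral_pos_of_ae_pos [NeZero μ] {f : α → ℝ} (hf : ∀ᵐ x ∂μ, 0 < f x)
    (hfi : Integrable f μ) : 0 < ∫ x, f x ∂μ := by
  rw [integral_pos_iff_support_of_nonneg_ae (hf.mono fun _ h => h.le) hfi, pos_iff_ne_zero]
  intro h
  obtain ⟨x, hx, hx'⟩ := (hf.and (measure_eq_zero_iff_ae_notMem.1 h)).exists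
  exact hx' hx.ne'

lemma one_add_mul_sub_one_le_rpow {t p : ℝ} (ht : 0 < t) (hp : p ≤ 0 ∨ 1 ≤ p) :
    1 + p * (t - 1) ≤ t ^ p := by
  rcases hp with hp | hp
  · calc 1 + p * (t - 1) ≤ p * log t + 1 := by
          nlinarith [mul_le_mul_of_nonpos_left (log_le_sub_one_of_pos ht) hp]
      _ ≤ exp (p * log t) := add_one_le_exp _
      _ = t ^ p := by rw [rpow_def_of_pos ht, mul_comm]
  · simpa using one_add_mul_self_le_rpow_one_add (s := t - 1) (by linarith) hp

lemma rpow_add_mul_rpow_sub_one_mul_sub_le_rpow {x m p : ℝ} (hx : 0 < x) (hm : 0 < m)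
    (hp : p ≤ 0 ∨ 1 ≤ p) : m ^ p + p * m ^ (p - 1) * (x - m) ≤ x ^ p :=
  calc m ^ p + p * m ^ (p - 1) * (x - m) = m ^ p * (1 + p * (x / m - 1)) := by
        rw [rpow_sub_one hm.ne']; field_simp
    _ ≤ m ^ p * (x / m) ^ p :=
        mul_le_mul_of_nonneg_left (one_add_mul_sub_one_le_rpow (div_pos hx hm) hp) (by positivity)
    _ = x ^ p := by rw [div_rpow hx.le hm.le]; field_simp

variable [IsProbabilityMeasure μ]

theorem rpow_integral_le_integral_rpow {f : α → ℝ} {p : ℝ} (hp : p ≤ 0 ∨ 1 ≤ p)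
    (hf : ∀ᵐ x ∂μ, 0 < f x) (hfi : Integrable f μ) (hfpi : Integrable (fun x => f x ^ p) μ) :
    (∫ x, f x ∂μ) ^ p ≤ ∫ x, f x ^ p ∂μ := by
  set m := ∫ x, f x ∂μ
  have hm : 0 < m := integral_pos_of_ae_pos hf hfi
  calc m ^ p = ∫ x, (m ^ p + p * m ^ (p - 1) * (f x - m)) ∂μ := by
        rw [integral_add (integrable_const _) (by fun_prop), integral_const_mul,
          integral_sub hfi (integrable_const m)]
        simp [m]
    _ ≤ ∫ x, f x ^ p ∂μ :=
        integral_mono_ae (by fun_prop) hfpi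
          (hf.mono fun x hx => rpow_add_mul_rpow_sub_one_mul_sub_le_rpow hx hm hp)

theorem integral_log_le_log_integral {f : α → ℝ} (hf : ∀ᵐ x ∂μ, 0 < f x)
    (hfi : Integrable f μ) (hlog : Integrable (fun x => log (f x)) μ) :
    ∫ x, log (f x) ∂μ ≤ log (∫ x, f x ∂μ) := by
  set m := ∫ x, f x ∂μ
  have hm : 0 < m := integral_pos_of_ae_pos hf hfi
  have tangent : ∀ᵐ x ∂μ, log (f x) ≤ log m + (m⁻¹ * f x - 1) := hf.mono fun x hx => by
    have := log_le_sub_one_of_pos (mul_pos (inv_pos.2 hm) hx)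
    rw [log_mul (inv_ne_zero hm.ne') hx.ne', log_inv] at this
    linarith
  calc ∫ x, log (f x) ∂μ ≤ ∫ x, (log m + (m⁻¹ * f x - 1)) ∂μ :=
        integral_mono_ae hlog (by fun_prop) tangent
    _ = log m := by
        rw [integral_add (integrable_const _) (by fun_prop),
          integral_sub (by fun_prop) (integrable_const 1), integral_const_mul,
          show ∫ x, f x ∂μ = m from rfl]
        simp [hm.ne']

def logPowerMean (μ : Measure α) (g : α → ℝ) (s : ℝ) : ℝ :=
  if s = 0 then ∫ x, log (g x) ∂μ else s⁻¹ * log (∫ x, g x ^ s ∂μ)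

def LogPowerMeanFinite (μ : Measure α) (g : α → ℝ) (s : ℝ) : Prop :=
  (s = 0 → Integrable (fun x => log (g x)) μ) ∧ (s ≠ 0 → Integrable (fun x => g x ^ s) μ)

variable {g : α → ℝ}

lemma mul_integral_log_le_log_integral_rpow {s : ℝ} (hg : ∀ᵐ x ∂μ, 0 < g x)
    (hlog : Integrable (fun x => log (g x)) μ) (hgs : Integrable (fun x => g x ^ s) μ) :
    s * ∫ x, log (g x) ∂μ ≤ log (∫ x, g x ^ s ∂μ) := by
  have hlog_rpow : (fun x => s * log (g x)) =ᵐ[μ] fun x => log (g x ^ s) :=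
    hg.mono fun x hx => (log_rpow hx s).symm
  rw [← integral_const_mul, integral_congr_ae hlog_rpow]
  exact integral_log_le_log_integral (hg.mono fun x hx => rpow_pos_of_pos hx s) hgs
    ((hlog.const_mul s).congr hlog_rpow)

lemma mul_log_integral_rpow_le_log_integral_rpow {r p : ℝ} (hg : ∀ᵐ x ∂μ, 0 < g x)
    (hp : p ≤ 0 ∨ 1 ≤ p) (hr : Integrable (fun x => g x ^ r) μ)
    (hrp : Integrable (fun x => g x ^ (r * p)) μ) :
    p * log (∫ x, g x ^ r ∂μ) ≤ log (∫ x, g x ^ (r * p) ∂μ) := by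
  have hgr : ∀ᵐ x ∂μ, 0 < g x ^ r := hg.mono fun x hx => rpow_pos_of_pos hx r
  have hpos : 0 < ∫ x, g x ^ r ∂μ := integral_pos_of_ae_pos hgr hr
  have hrpow_mul : (fun x => (g x ^ r) ^ p) =ᵐ[μ] fun x => g x ^ (r * p) :=
    hg.mono fun x hx => (rpow_mul hx.le r p).symm
  rw [← log_rpow hpos, ← integral_congr_ae hrpow_mul]
  exact log_le_log (rpow_pos_of_pos hpos p)
    (rpow_integral_le_integral_rpow hp hgr hr (hrp.congr hrpow_mul.symm))

lemma inv_mul_log_integral_rpow_le {s t : ℝ} (hg : ∀ᵐ x ∂μ, 0 < g x) (hst : s < t)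
    (hs : s ≠ 0) (ht : t ≠ 0) (hgs : Integrable (fun x => g x ^ s) μ)
    (hgt : Integrable (fun x => g x ^ t) μ) :
    s⁻¹ * log (∫ x, g x ^ s ∂μ) ≤ t⁻¹ * log (∫ x, g x ^ t ∂μ) := by
  rcases hs.lt_or_gt with hs | hs
  · have hp : s / t ≤ 0 ∨ 1 ≤ s / t := by
      rcases ht.lt_or_gt with ht | ht
      · exact Or.inr ((one_le_div_of_neg ht).2 hst.le)
      · exact Or.inl (div_neg_of_neg_of_pos hs ht).le
    have h := mul_log_integral_rpow_le_log_integral_rpow hg hp hgt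
      (by rwa [mul_div_cancel₀ s ht])
    rw [mul_div_cancel₀ s ht] at h
    calc s⁻¹ * log (∫ x, g x ^ s ∂μ) ≤ s⁻¹ * (s / t * log (∫ x, g x ^ t ∂μ)) :=
          mul_le_mul_of_nonpos_left h (inv_nonpos.2 hs.le)
      _ = t⁻¹ * log (∫ x, g x ^ t ∂μ) := by field_simp
  · have h := mul_log_integral_rpow_le_log_integral_rpow hg
      (Or.inr ((one_le_div hs).2 hst.le)) hgs (by rwa [mul_div_cancel₀ t hs.ne'])
    rw [mul_div_cancel₀ t hs.ne'] at h
    calc s⁻¹ * log (∫ x, g x ^ s ∂μ) = t⁻¹ * (t / s * log (∫ x, g x ^ s ∂μ)) := by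
          field_simp
      _ ≤ t⁻¹ * log (∫ x, g x ^ t ∂μ) :=
          mul_le_mul_of_nonneg_left h (inv_nonneg.2 (hs.trans hst).le)

theorem logPowerMean_mono {s t : ℝ} (hg : ∀ᵐ x ∂μ, 0 < g x) (hst : s ≤ t)
    (hs : LogPowerMeanFinite μ g s) (ht : LogPowerMeanFinite μ g t) :
    logPowerMean μ g s ≤ logPowerMean μ g t := by
  rcases hst.eq_or_lt with rfl | hst
  · exact le_rfl
  by_cases hs0 : s = 0
  · subst hs0
    simp only [logPowerMean, if_pos, if_neg hst.ne']
    rw [le_inv_mul_iff₀ hst]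
    exact mul_integral_log_le_log_integral_rpow hg (hs.1 rfl) (ht.2 hst.ne')
  by_cases ht0 : t = 0
  · subst ht0
    simp only [logPowerMean, if_pos, if_neg hs0]
    calc s⁻¹ * log (∫ x, g x ^ s ∂μ) ≤ s⁻¹ * (s * ∫ x, log (g x) ∂μ) :=
          mul_le_mul_of_nonpos_left (mul_integral_log_le_log_integral_rpow hg (ht.1 rfl)
            (hs.2 hs0)) (inv_nonpos.2 hst.le)
      _ = ∫ x, log (g x) ∂μ := inv_mul_cancel_left₀ hs0 _
  simp only [logPowerMean, if_neg hs0, if_neg ht0]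
  exact inv_mul_log_integral_rpow_le hg hst hs0 ht0 (hs.2 hs0) (ht.2 ht0)

end PowerMean

def sizeBiased (P : Measure Ω) (Z : Ω → ℝ) : Measure Ω :=
  P.withDensity fun ω => ENNReal.ofReal (Z ω)

section SizeBiased

variable {P : Measure Ω} {Z : Ω → ℝ}

lemma isProbabilityMeasure_sizeBiased (hZ : IsDensity P Z) :
    IsProbabilityMeasure (sizeBiased P Z) := by
  obtain ⟨hZi, hZ0, hZ1⟩ := hZ
  constructor
  rw [sizeBiased, withDensity_apply _ MeasurableSet.univ, Measure.restrict_univ,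
    ← ofReal_integral_eq_lintegral_ofReal hZi hZ0, hZ1, ENNReal.ofReal_one]

lemma ae_pos_sizeBiased (hZm : AEMeasurable Z P) : ∀ᵐ ω ∂sizeBiased P Z, 0 < Z ω :=
  (ae_withDensity_iff' hZm.ennreal_ofReal).2 <|
    ae_of_all _ fun _ h => ENNReal.ofReal_pos.1 (pos_iff_ne_zero.2 h)

lemma integral_sizeBiased (hZm : AEMeasurable Z P) (hZ0 : 0 ≤ᵐ[P] Z) (f : Ω → ℝ) :
    ∫ ω, f ω ∂sizeBiased P Z = ∫ ω, Z ω * f ω ∂P := by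
  rw [sizeBiased, integral_withDensity_eq_integral_toReal_smul₀ hZm.ennreal_ofReal
    (ae_of_all _ fun _ => ENNReal.ofReal_lt_top)]
  exact integral_congr_ae (hZ0.mono fun ω h => by simp [ENNReal.toReal_ofReal h])

lemma integrable_sizeBiased_iff (hZm : AEMeasurable Z P) (hZ0 : 0 ≤ᵐ[P] Z) {f : Ω → ℝ} :
    Integrable f (sizeBiased P Z) ↔ Integrable (fun ω => Z ω * f ω) P := by
  rw [sizeBiased, integrable_withDensity_iff_integrable_smul₀' hZm.ennreal_ofReal
    (ae_of_all _ fun _ => ENNReal.ofReal_lt_top)]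
  exact integrable_congr (hZ0.mono fun ω h => by simp [ENNReal.toReal_ofReal h])

lemma mul_rpow_sub_one_ae_eq (hZ0 : 0 ≤ᵐ[P] Z) {q : ℝ} (hq : q ≠ 0) :
    (fun ω => Z ω * Z ω ^ (q - 1)) =ᵐ[P] fun ω => Z ω ^ q := by
  filter_upwards [hZ0] with ω h
  rcases h.eq_or_lt with h | h
  · simp [← h, zero_rpow hq]
  · rw [rpow_sub_one h.ne', mul_div_assoc', mul_div_cancel_left₀ _ h.ne']

lemma mul_rpow_neg_one_ae_eq (hZ0 : 0 ≤ᵐ[P] Z) :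
    (fun ω => Z ω * Z ω ^ (-1 : ℝ)) =ᵐ[P] {ω | 0 < Z ω}.indicator 1 := by
  filter_upwards [hZ0] with ω h
  rcases h.eq_or_lt with h | h
  · simp [← h]
  · rw [Set.indicator_of_mem (show ω ∈ {ω | 0 < Z ω} from h), rpow_neg_one,
      mul_inv_cancel₀ h.ne', Pi.one_apply]

theorem renyiEntropy_eq_logPowerMean (hZm : AEMeasurable Z P) (hZ0 : 0 ≤ᵐ[P] Z) (q : ℝ) :
    renyiEntropy P Z q = logPowerMean (sizeBiased P Z) Z (q - 1) := by
  rw [logPowerMean, integral_sizeBiased hZm hZ0, integral_sizeBiased hZm hZ0]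
  by_cases hq0 : q = 0
  · subst hq0
    rw [zero_sub, integral_congr_ae (mul_rpow_neg_one_ae_eq hZ0),
      integral_indicator₀ (nullMeasurableSet_lt aemeasurable_const hZm)]
    simp [renyiEntropy, Measure.real]
  by_cases hq1 : q = 1
  · subst hq1
    simp [renyiEntropy]
  rw [integral_congr_ae (mul_rpow_sub_one_ae_eq hZ0 hq0)]
  simp [renyiEntropy, hq0, hq1, sub_eq_zero]

theorem RenyiFinite.logPowerMeanFinite [IsFiniteMeasure P] (hZm : AEMeasurable Z P)
    (hZ0 : 0 ≤ᵐ[P] Z) {q : ℝ} (h : RenyiFinite P Z q) :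
    LogPowerMeanFinite (sizeBiased P Z) Z (q - 1) := by
  rw [LogPowerMeanFinite, integrable_sizeBiased_iff hZm hZ0, integrable_sizeBiased_iff hZm hZ0]
  refine ⟨fun hq => h.1 (by linarith), fun hq => ?_⟩
  by_cases hq0 : q = 0
  · subst hq0
    rw [zero_sub]
    exact ((integrable_const 1).indicator₀ (nullMeasurableSet_lt aemeasurable_const hZm)).congr
      (mul_rpow_neg_one_ae_eq hZ0).symm
  · exact (h.2.1 hq0 (sub_ne_zero.1 hq)).congr (mul_rpow_sub_one_ae_eq hZ0 hq0).symm

end SizeBiased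

/-- The Rényi entropy of a density is nondecreasing in its order. -/
theorem renyiEntropy_mono (P : Measure Ω) [IsProbabilityMeasure P] (Z : Ω → ℝ)
    (hZ : IsDensity P Z) (q₁ q₂ : ℝ) (hq : q₁ ≤ q₂)
    (h₁ : RenyiFinite P Z q₁) (h₂ : RenyiFinite P Z q₂) :
    renyiEntropy P Z q₁ ≤ renyiEntropy P Z q₂ := by
  have := isProbabilityMeasure_sizeBiased hZ
  obtain ⟨hZi, hZ0, -⟩ := hZ
  rw [renyiEntropy_eq_logPowerMean hZi.aemeasurable hZ0,
    renyiEntropy_eq_logPowerMean hZi.aemeasurable hZ0]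
  exact logPowerMean_mono (ae_pos_sizeBiased hZi.aemeasurable) (sub_le_sub_right hq 1)
    (h₁.logPowerMeanFinite hZi.aemeasurable hZ0) (h₂.logPowerMeanFinite hZi.aemeasurable hZ0)

end
end

section
/- Let α ∈ [0,1) and p ∈ (0,1). Then for every essentially bounded random variable Y on a probability space (Ω, 𝓕, P), the Entropic Value-at-Risk of order p collapses to the essential supremum: EVaR_α^p(Y) = sup{ E[YZ] : Z a density } = ess sup Y. -/
open MeasureTheory Real Filter

noncomputable section

variable {Ω : Type*} [MeasurableSpace Ω]

/-- Entropic Value-at-Risk with Rényi-entropy constraint of (dual/conjugate) order `q`: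
the supremum of `E[Y Z]` over all densities `Z` with well-defined Rényi entropy
`H_q(Z) ≤ log (1/(1-α))` (and `E[Y Z]` defined). -/
def EVaRd (P : Measure Ω) (α q : ℝ) (Y : Ω → ℝ) : EReal :=
  sSup {x : EReal | ∃ Z : Ω → ℝ, IsDensity P Z ∧ RenyiFinite P Z q ∧
    renyiEntropy P Z q ≤ Real.log (1 / (1 - α)) ∧
    Integrable (fun ω => Y ω * Z ω) P ∧
    x = ((∫ ω, Y ω * Z ω ∂P : ℝ) : EReal)}

/-- The Average Value-at-Risk: the supremum of `E[Y Z]` over all densities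
`Z ≤ 1/(1-α)` a.s. -/
def AVaR (P : Measure Ω) (α : ℝ) (Y : Ω → ℝ) : EReal :=
  sSup {x : EReal | ∃ Z : Ω → ℝ, IsDensity P Z ∧ (∀ᵐ ω ∂P, Z ω ≤ 1 / (1 - α)) ∧
    Integrable (fun ω => Y ω * Z ω) P ∧
    x = ((∫ ω, Y ω * Z ω ∂P : ℝ) : EReal)}

/-- The Entropic Value-at-Risk of (primal) order `p`, with the Rényi-entropy
constraint of the Hölder-conjugate order `p' = p/(p-1)`; for `p = 1` it is the AV@R. -/
def EVaR (P : Measure Ω) (α p : ℝ) (Y : Ω → ℝ) : EReal :=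
  if p = 1 then AVaR P α Y else EVaRd P α (p / (p - 1)) Y

/-!
For `p ∈ (0, 1)` the conjugate order `q = p / (p - 1)` is negative, and then the Rényi constraint
is void: `z ^ q ≥ 1 + q (z - 1)` gives `E[Z ^ q] ≥ 1`, i.e. `H_q(Z) ≤ 0 ≤ log (1 / (1 - α))`, for
every density `Z > 0` with `E[Z ^ q] < ∞`, in particular for every density bounded below by some
`δ > 0`. Such densities already approach `ess sup Y`, which bounds `E[Y Z]` for every density:
the normalised indicator of `{Y > t}`, mixed with a little of the constant density `1`, is one of
them, with `E[Y Z]` at least nearly `t`.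
-/

open Topology

section Density

variable {P : Measure Ω} {Y Z Z' : Ω → ℝ}

lemma isDensity_one [IsProbabilityMeasure P] : IsDensity P fun _ => 1 :=
  ⟨integrable_const 1, ae_of_all _ fun _ => zero_le_one, by simp⟩

lemma IsDensity.mix (hZ : IsDensity P Z) (hZ' : IsDensity P Z') {θ : ℝ} (hθ : θ ∈ Set.Icc 0 1) :
    IsDensity P fun ω => (1 - θ) * Z ω + θ * Z' ω := by
  obtain ⟨hZi, hZ0, hZ1⟩ := hZ
  obtain ⟨hZ'i, hZ'0, hZ'1⟩ := hZ'
  refine ⟨(hZi.const_mul _).add (hZ'i.const_mul _), ?_, ?_⟩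
  · filter_upwards [hZ0, hZ'0] with ω h h'
    exact add_nonneg (mul_nonneg (sub_nonneg.2 hθ.2) h) (mul_nonneg hθ.1 h')
  · rw [integral_add (hZi.const_mul _) (hZ'i.const_mul _), integral_const_mul, integral_const_mul,
      hZ1, hZ'1]
    ring

lemma isDensity_indicator_inv_measureReal [IsFiniteMeasure P] {A : Set Ω}
    (hA : NullMeasurableSet A P) (hA0 : P A ≠ 0) :
    IsDensity P (A.indicator fun _ => (P.real A)⁻¹) := by
  refine ⟨(integrable_const _).indicator₀ hA, ae_of_all _ fun ω => ?_, ?_⟩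
  · exact Set.indicator_nonneg (fun _ _ => inv_nonneg.2 measureReal_nonneg) ω
  · rw [integral_indicator₀ hA, setIntegral_const, smul_eq_mul,
      mul_inv_cancel₀ ((measureReal_ne_zero_iff (measure_ne_top P A)).2 hA0)]

lemma le_integral_mul_indicator_inv_measureReal [IsFiniteMeasure P] {A : Set Ω}
    (hA : NullMeasurableSet A P) (hA0 : P A ≠ 0) (hY : IntegrableOn Y A P) {t : ℝ}
    (ht : ∀ ω ∈ A, t ≤ Y ω) :
    t ≤ ∫ ω, Y ω * A.indicator (fun _ => (P.real A)⁻¹) ω ∂P := by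
  have hA0' : P.real A ≠ 0 := (measureReal_ne_zero_iff (measure_ne_top P A)).2 hA0
  simp_rw [← Set.indicator_mul_right]
  rw [integral_indicator₀ hA, integral_mul_const]
  calc t = (∫ _ in A, t ∂P) * (P.real A)⁻¹ := by
        rw [setIntegral_const, smul_eq_mul, mul_comm, inv_mul_cancel_left₀ hA0']
    _ ≤ (∫ ω in A, Y ω ∂P) * (P.real A)⁻¹ := by
        refine mul_le_mul_of_nonneg_right ?_ (inv_nonneg.2 measureReal_nonneg)
        exact setIntegral_mono_on₀ (integrableOn_const (measure_ne_top P A)) hY hA ht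

lemma IsDensity.exists_const_le_lt_integral_mul [IsProbabilityMeasure P] (hZ : IsDensity P Z)
    (hY : MemLp Y ⊤ P) {x : ℝ} (hx : x < ∫ ω, Y ω * Z ω ∂P) :
    ∃ Z', IsDensity P Z' ∧ (∃ δ > 0, ∀ᵐ ω ∂P, δ ≤ Z' ω) ∧ x < ∫ ω, Y ω * Z' ω ∂P := by
  set u := ∫ ω, Y ω * Z ω ∂P
  set v := ∫ ω, Y ω ∂P
  have hmix : Tendsto (fun δ : ℝ => (1 - δ) * u + δ * v) (𝓝[>] 0) (𝓝 u) := by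
    have : Continuous fun δ : ℝ => (1 - δ) * u + δ * v := by fun_prop
    simpa using this.tendsto 0 |>.mono_left nhdsWithin_le_nhds
  obtain ⟨δ, hxδ, hδ⟩ :=
    ((hmix.eventually (lt_mem_nhds hx)).and (Ioo_mem_nhdsGT one_pos)).exists
  refine ⟨_, hZ.mix isDensity_one (Set.Ioo_subset_Icc_self hδ), ⟨δ, hδ.1, ?_⟩, hxδ.trans_eq ?_⟩
  · filter_upwards [hZ.2.1] with ω hω
    simpa using mul_nonneg (sub_nonneg.2 hδ.2.le) hω
  · have hYZ : Integrable (fun ω => Y ω * Z ω) P := hZ.1.mul_of_top_right hY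
    have hYi : Integrable Y P := hY.integrable le_top
    simp_rw [mul_add, mul_one, mul_left_comm (Y _)]
    rw [integral_add (hYZ.const_mul _) (hYi.mul_const _), integral_const_mul, integral_mul_const]
    ring

end Density

section EssSup

variable {P : Measure Ω} {Y Z : Ω → ℝ}

lemma MeasureTheory.MemLp.isBoundedUnder_abs (hY : MemLp Y ⊤ P) :
    IsBoundedUnder (· ≤ ·) (ae P) fun ω => |Y ω| := by
  obtain ⟨C, hC⟩ := (eLpNormEssSup_lt_top_iff_isBoundedUnder (f := Y) (μ := P)).1
    (eLpNorm_exponent_top (f := Y) (μ := P) ▸ hY.2)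
  refine ⟨C, eventually_map.2 ?_⟩
  filter_upwards [eventually_map.1 hC] with ω hω
  exact NNReal.coe_le_coe.2 hω

lemma IsDensity.integral_mul_le_essSup (hZ : IsDensity P Z)
    (hY : IsBoundedUnder (· ≤ ·) (ae P) Y) (hYZ : Integrable (fun ω => Y ω * Z ω) P) :
    ∫ ω, Y ω * Z ω ∂P ≤ essSup Y P :=
  calc ∫ ω, Y ω * Z ω ∂P ≤ ∫ ω, essSup Y P * Z ω ∂P := by
        refine integral_mono_ae hYZ (hZ.1.const_mul _) ?_
        filter_upwards [ae_le_essSup hY, hZ.2.1] with ω hYω hZω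
        exact mul_le_mul_of_nonneg_right hYω hZω
    _ = essSup Y P := by rw [integral_const_mul, hZ.2.2, mul_one]

lemma exists_isDensity_lt_integral_mul [IsProbabilityMeasure P] (hY : MemLp Y ⊤ P) {x : ℝ}
    (hx : x < essSup Y P) : ∃ Z, IsDensity P Z ∧ x < ∫ ω, Y ω * Z ω ∂P := by
  obtain ⟨t, hxt, htY⟩ := exists_between hx
  set A := {ω | t < Y ω}
  have hA : NullMeasurableSet A P := nullMeasurableSet_lt aemeasurable_const hY.1.aemeasurable
  have hA0 : P A ≠ 0 := frequently_ae_iff.1 <| frequently_lt_of_lt_limsup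
    (isBoundedUnder_le_abs.1 hY.isBoundedUnder_abs).2.isCoboundedUnder_le htY
  refine ⟨_, isDensity_indicator_inv_measureReal hA hA0, hxt.trans_le ?_⟩
  exact le_integral_mul_indicator_inv_measureReal hA hA0 (hY.integrable le_top).integrableOn
    fun _ hω => hω.le

end EssSup

section Renyi

variable {P : Measure Ω} {Z : Ω → ℝ} {q : ℝ}

lemma Real.one_add_mul_sub_one_le_rpow {z : ℝ} (hz : 0 < z) (hq : q ≤ 0) :
    1 + q * (z - 1) ≤ z ^ q :=
  calc 1 + q * (z - 1) ≤ q * Real.log z + 1 := by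
        nlinarith [Real.log_le_sub_one_of_pos hz]
    _ ≤ z ^ q := by
        rw [Real.rpow_def_of_pos hz, mul_comm]
        exact Real.add_one_le_exp _

lemma IsDensity.one_le_integral_rpow [IsProbabilityMeasure P] (hZ : IsDensity P Z)
    (hpos : ∀ᵐ ω ∂P, 0 < Z ω) (hq : q ≤ 0) (hZq : Integrable (fun ω => Z ω ^ q) P) :
    1 ≤ ∫ ω, Z ω ^ q ∂P := by
  have hZ1 : Integrable (fun ω => Z ω - 1) P := hZ.1.sub (integrable_const 1)
  calc (1 : ℝ) = ∫ ω, (1 + q * (Z ω - 1)) ∂P := by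
        rw [integral_add (integrable_const 1) (hZ1.const_mul q), integral_const_mul,
          integral_sub hZ.1 (integrable_const 1), hZ.2.2]
        simp
    _ ≤ ∫ ω, Z ω ^ q ∂P := by
        refine integral_mono_ae ((integrable_const 1).add (hZ1.const_mul q)) hZq ?_
        filter_upwards [hpos] with ω hω
        exact Real.one_add_mul_sub_one_le_rpow hω hq

lemma IsDensity.renyiEntropy_nonpos [IsProbabilityMeasure P] (hZ : IsDensity P Z) (hq : q < 0)
    (hfin : RenyiFinite P Z q) : renyiEntropy P Z q ≤ 0 := by
  rw [renyiEntropy, if_neg hq.ne, if_neg (by linarith)]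
  exact mul_nonpos_of_nonpos_of_nonneg (inv_nonpos.2 (by linarith)) <| Real.log_nonneg <|
    hZ.one_le_integral_rpow (hfin.2.2 hq) hq.le (hfin.2.1 hq.ne (by linarith))

lemma renyiFinite_of_const_le [IsFiniteMeasure P] (hq : q < 0) (hZ : AEStronglyMeasurable Z P)
    {δ : ℝ} (hδ : 0 < δ) (hδZ : ∀ᵐ ω ∂P, δ ≤ Z ω) : RenyiFinite P Z q := by
  refine ⟨fun h => absurd h (by linarith), fun _ _ => ?_, fun _ => ?_⟩
  · refine (integrable_const (δ ^ q)).mono' (hZ.aemeasurable.pow_const q).aestronglyMeasurable ?_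
    filter_upwards [hδZ] with ω hω
    rw [Real.norm_of_nonneg (Real.rpow_nonneg (hδ.le.trans hω) q)]
    exact Real.rpow_le_rpow_of_nonpos hδ hω hq.le
  · filter_upwards [hδZ] with ω hω
    exact hδ.trans_le hω

end Renyi

section EVaR

variable {P : Measure Ω} {Y : Ω → ℝ}

lemma sSup_integral_mul_density_le_essSup (hY : IsBoundedUnder (· ≤ ·) (ae P) Y) :
    sSup {x : EReal | ∃ Z : Ω → ℝ, IsDensity P Z ∧
      Integrable (fun ω => Y ω * Z ω) P ∧ x = ((∫ ω, Y ω * Z ω ∂P : ℝ) : EReal)} ≤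
      ((essSup Y P : ℝ) : EReal) :=
  sSup_le fun _ ⟨_, hZ, hYZ, hx⟩ => hx ▸ EReal.coe_le_coe_iff.2 (hZ.integral_mul_le_essSup hY hYZ)

lemma essSup_le_EVaRd [IsProbabilityMeasure P] {α q : ℝ} (hα : α ∈ Set.Ico 0 1) (hq : q < 0)
    (hY : MemLp Y ⊤ P) : ((essSup Y P : ℝ) : EReal) ≤ EVaRd P α q Y := by
  have hlog : 0 ≤ Real.log (1 / (1 - α)) :=
    Real.log_nonneg (by rw [le_div_iff₀ (by linarith [hα.2])]; linarith [hα.1])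
  refine EReal.ge_of_forall_gt_iff_ge.1 fun x hx => ?_
  obtain ⟨Z₀, hZ₀, hxZ₀⟩ := exists_isDensity_lt_integral_mul hY (EReal.coe_lt_coe_iff.1 hx)
  obtain ⟨Z, hZ, ⟨δ, hδ, hδZ⟩, hxZ⟩ := hZ₀.exists_const_le_lt_integral_mul hY hxZ₀
  have hfin : RenyiFinite P Z q := renyiFinite_of_const_le hq hZ.1.aestronglyMeasurable hδ hδZ
  refine le_sSup_of_le ⟨Z, hZ, hfin, (hZ.renyiEntropy_nonpos hq hfin).trans hlog,
    hZ.1.mul_of_top_right hY, rfl⟩ (EReal.coe_le_coe_iff.2 hxZ.le)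

end EVaR

/-- for `α ∈ [0,1)` and `p ∈ (0,1)` the Entropic Value-at-Risk of
order `p` of a bounded random variable collapses to the essential supremum:
`EVaR_α^p(Y) = sup{E[YZ] : Z a density} = ess sup Y`. -/
theorem evar_collapse (P : Measure Ω) [IsProbabilityMeasure P]
    (α p : ℝ) (hα : α ∈ Set.Ico (0 : ℝ) 1) (hp : p ∈ Set.Ioo (0 : ℝ) 1)
    (Y : Ω → ℝ) (hY : MemLp Y ⊤ P) :
    EVaR P α p Y =
      sSup {x : EReal | ∃ Z : Ω → ℝ, IsDensity P Z ∧
        Integrable (fun ω => Y ω * Z ω) P ∧ x = ((∫ ω, Y ω * Z ω ∂P : ℝ) : EReal)} ∧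
    EVaR P α p Y = ((essSup Y P : ℝ) : EReal) := by
  have hq : p / (p - 1) < 0 := div_neg_of_pos_of_neg hp.1 (by linarith [hp.2])
  have hEVaR : EVaR P α p Y = EVaRd P α (p / (p - 1)) Y := if_neg hp.2.ne
  set S := {x : EReal | ∃ Z : Ω → ℝ, IsDensity P Z ∧
    Integrable (fun ω => Y ω * Z ω) P ∧ x = ((∫ ω, Y ω * Z ω ∂P : ℝ) : EReal)}
  have hle : EVaRd P α (p / (p - 1)) Y ≤ sSup S :=
    sSup_le_sSup fun _ ⟨Z, hZ, _, _, hYZ, hx⟩ => ⟨Z, hZ, hYZ, hx⟩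
  have hS : sSup S ≤ ((essSup Y P : ℝ) : EReal) :=
    sSup_integral_mul_density_le_essSup (isBoundedUnder_le_abs.1 hY.isBoundedUnder_abs).1
  have hge := essSup_le_EVaRd hα hq hY
  rw [hEVaR]
  exact ⟨le_antisymm hle (hS.trans hge), le_antisymm (hle.trans hS) hge⟩

end
end

section
/- Let α ∈ (0,1) and p < 0. Then for a nonnegative random variable Y on a probability space (Ω, 𝓕, P), EVaR_α^p(Y) < ∞ if and only if Y is essentially bounded. In particular, if Y is not essentially bounded then EVaR_α^p(Y) = ∞. -/
open MeasureTheory Real Filter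

noncomputable section

variable {Ω : Type*} [MeasurableSpace Ω]

/-!
If `‖Y‖_∞ < ∞`, every `E[YZ]` with `Z` a density is at most `‖Y‖_∞`. Conversely, for
`q = p' ∈ (0,1)` the Rényi constraint `H_q(Z) ≤ log (1/β)`, `β = 1 - α`, reads
`E[Z^q] ≥ γ := β^(1-q)`, and `γ < 1` because `α > 0`. This leaves room for a mass `1 - γ` that
can be put anywhere: with `B = {Y ≤ N}`, `P(B) ≥ γ`, and `A = {N < Y ≤ M}` of positive
probability, the density `Z = (1-γ) 1_A / P(A) + γ 1_B / P(B)` satisfies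
`E[Z^q] ≥ P(B) (γ / P(B))^q ≥ γ` and `E[YZ] ≥ (1-γ) N`, which is unbounded in `N` when `Y` is
not essentially bounded.
-/

open Topology

section

variable {P : Measure Ω} {α q : ℝ} {Y Z : Ω → ℝ}

lemma IsDensity.integral_mul_le (hZ : IsDensity P Z) (hYZ : Integrable (fun ω => Y ω * Z ω) P)
    {C : ℝ} (hYC : ∀ᵐ ω ∂P, Y ω ≤ C) : ∫ ω, Y ω * Z ω ∂P ≤ C :=
  calc ∫ ω, Y ω * Z ω ∂P ≤ ∫ ω, C * Z ω ∂P := by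
        refine integral_mono_ae hYZ (hZ.1.const_mul C) ?_
        filter_upwards [hYC, hZ.2.1] with ω hYω hZω using mul_le_mul_of_nonneg_right hYω hZω
    _ = C := by rw [integral_const_mul, hZ.2.2, mul_one]

lemma EVaRd_lt_top_of_memLp_top (hY : MemLp Y ⊤ P) : EVaRd P α q Y < ⊤ := by
  refine (sSup_le ?_).trans_lt (EReal.coe_lt_top (lpNorm Y ⊤ P))
  rintro _ ⟨Z, hZ, -, -, hYZ, rfl⟩
  refine EReal.coe_le_coe_iff.2 (hZ.integral_mul_le hYZ ?_)
  filter_upwards [ae_le_lpNorm_exponent_top hY] with ω hω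
  exact (le_abs_self _).trans hω

lemma EVaRd_congr_ae {Y' : Ω → ℝ} (h : Y =ᵐ[P] Y') : EVaRd P α q Y = EVaRd P α q Y' := by
  unfold EVaRd
  congr 1
  ext x
  refine exists_congr fun Z => ?_
  have hYZ : (fun ω => Y ω * Z ω) =ᵐ[P] fun ω => Y' ω * Z ω := by
    filter_upwards [h] with ω hω
    rw [hω]
  rw [integrable_congr hYZ, integral_congr_ae hYZ]

lemma exists_measurable_nonneg_ae_eq (hYm : AEMeasurable Y P) (hY : 0 ≤ᵐ[P] Y) :
    ∃ Y' : Ω → ℝ, Measurable Y' ∧ 0 ≤ Y' ∧ Y =ᵐ[P] Y' := by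
  refine ⟨fun ω => max (hYm.mk Y ω) 0, hYm.measurable_mk.max measurable_const,
    fun ω => le_max_right _ _, ?_⟩
  filter_upwards [hYm.ae_eq_mk, hY] with ω hmk hω
  rw [← hmk]
  exact (max_eq_left hω).symm

lemma renyiEntropy_le_log_one_div (hq0 : q ≠ 0) (hq1 : q < 1) {β : ℝ} (hβ : 0 < β)
    (h : β ^ (1 - q) ≤ ∫ ω, Z ω ^ q ∂P) : renyiEntropy P Z q ≤ Real.log (1 / β) := by
  rw [renyiEntropy, if_neg hq0, if_neg hq1.ne]
  have hlog : (1 - q) * Real.log β ≤ Real.log (∫ ω, Z ω ^ q ∂P) := by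
    rw [← Real.log_rpow hβ]
    exact Real.log_le_log (by positivity) h
  calc (q - 1)⁻¹ * Real.log (∫ ω, Z ω ^ q ∂P) ≤ (q - 1)⁻¹ * ((1 - q) * Real.log β) :=
        mul_le_mul_of_nonpos_left hlog (inv_nonpos.2 (by linarith))
    _ = Real.log (1 / β) := by
        rw [one_div, Real.log_inv]
        field_simp [sub_ne_zero.2 hq1.ne]
        ring

section Tail

variable [IsProbabilityMeasure P]

lemma tendsto_measureReal_preimage_Iic_atTop (hY : AEMeasurable Y P) :
    Tendsto (fun N => P.real (Y ⁻¹' Set.Iic N)) atTop (𝓝 1) := by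
  have := Measure.isProbabilityMeasure_map hY
  have h := tendsto_measure_Iic_atTop (P.map Y)
  rw [measure_univ] at h
  simpa [Function.comp_def, Measure.map_apply_of_aemeasurable hY measurableSet_Iic,
    Measure.real] using (ENNReal.tendsto_toReal ENNReal.one_ne_top).comp h

lemma measureReal_preimage_Iic_lt_one_of_not_memLp_top (hYm : AEStronglyMeasurable Y P)
    (hY : 0 ≤ᵐ[P] Y) (hub : ¬ MemLp Y ⊤ P) (N : ℝ) : P.real (Y ⁻¹' Set.Iic N) < 1 := by
  refine lt_of_le_of_ne measureReal_le_one fun h => hub (memLp_top_of_bound hYm N ?_)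
  have hle : ∀ᵐ ω ∂P, Y ω ≤ N := by
    rw [ae_iff, ← measureReal_eq_zero_iff]
    have hc := probReal_compl_eq_one_sub₀ (μ := P)
      (hYm.aemeasurable.nullMeasurableSet_preimage measurableSet_Iic (s := Set.Iic N))
    rwa [h, sub_self] at hc
  filter_upwards [hle, hY] with ω hN h0
  rwa [Real.norm_eq_abs, abs_of_nonneg h0]

end Tail

def twoStepFun {X : Type*} (A B : Set X) (x y : ℝ) : X → ℝ :=
  A.indicator (fun _ => x) + B.indicator (fun _ => y)

section TwoStepFun

variable {X : Type*} {A B : Set X} {x y x' y' : ℝ} {ω : X}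

lemma twoStepFun_of_mem_left (hAB : Disjoint A B) (h : ω ∈ A) : twoStepFun A B x y ω = x := by
  simp [twoStepFun, h, Set.disjoint_left.1 hAB h]

lemma twoStepFun_of_mem_right (hAB : Disjoint A B) (h : ω ∈ B) : twoStepFun A B x y ω = y := by
  simp [twoStepFun, h, Set.disjoint_right.1 hAB h]

lemma twoStepFun_of_notMem (hA : ω ∉ A) (hB : ω ∉ B) : twoStepFun A B x y ω = 0 := by
  simp [twoStepFun, hA, hB]

lemma twoStepFun_nonneg (hx : 0 ≤ x) (hy : 0 ≤ y) : 0 ≤ twoStepFun A B x y ω :=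
  add_nonneg (Set.indicator_nonneg (fun _ _ => hx) ω) (Set.indicator_nonneg (fun _ _ => hy) ω)

lemma twoStepFun_mono (hx : ω ∈ A → x ≤ x') (hy : ω ∈ B → y ≤ y') :
    twoStepFun A B x y ω ≤ twoStepFun A B x' y' ω :=
  add_le_add (Set.indicator_le_indicator' hx) (Set.indicator_le_indicator' hy)

lemma mul_twoStepFun (c : ℝ) : c * twoStepFun A B x y ω = twoStepFun A B (c * x) (c * y) ω := by
  by_cases hA : ω ∈ A <;> by_cases hB : ω ∈ B <;> simp [twoStepFun, hA, hB, mul_add]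

lemma comp_twoStepFun (hAB : Disjoint A B) {φ : ℝ → ℝ} (hφ : φ 0 = 0) :
    (fun ω => φ (twoStepFun A B x y ω)) = twoStepFun A B (φ x) (φ y) := by
  funext ω
  by_cases hA : ω ∈ A
  · rw [twoStepFun_of_mem_left hAB hA, twoStepFun_of_mem_left hAB hA]
  by_cases hB : ω ∈ B
  · rw [twoStepFun_of_mem_right hAB hB, twoStepFun_of_mem_right hAB hB]
  · rw [twoStepFun_of_notMem hA hB, twoStepFun_of_notMem hA hB, hφ]

end TwoStepFun

section TwoStepFunIntegral

variable [IsFiniteMeasure P] {A B : Set Ω} {x y x' y' : ℝ}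

lemma integrable_twoStepFun (hA : MeasurableSet A) (hB : MeasurableSet B) :
    Integrable (twoStepFun A B x y) P :=
  ((integrable_const x).indicator hA).add ((integrable_const y).indicator hB)

lemma integral_twoStepFun (hA : MeasurableSet A) (hB : MeasurableSet B) :
    ∫ ω, twoStepFun A B x y ω ∂P = P.real A * x + P.real B * y := by
  rw [twoStepFun, integral_add' ((integrable_const x).indicator hA)
    ((integrable_const y).indicator hB), integral_indicator_const _ hA,
    integral_indicator_const _ hB, smul_eq_mul, smul_eq_mul]

lemma integrable_mul_twoStepFun (hA : MeasurableSet A) (hB : MeasurableSet B)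
    (hYm : AEStronglyMeasurable Y P) (hx : 0 ≤ x) (hy : 0 ≤ y)
    (hYA : ∀ ω ∈ A, |Y ω| ≤ x') (hYB : ∀ ω ∈ B, |Y ω| ≤ y') :
    Integrable (fun ω => Y ω * twoStepFun A B x y ω) P := by
  refine (integrable_twoStepFun (x := x' * x) (y := y' * y) hA hB).mono'
    (hYm.mul (integrable_twoStepFun hA hB).1) (ae_of_all _ fun ω => ?_)
  rw [norm_mul, Real.norm_eq_abs, Real.norm_of_nonneg (twoStepFun_nonneg hx hy), mul_twoStepFun]
  exact twoStepFun_mono (fun h => mul_le_mul_of_nonneg_right (hYA ω h) hx)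
    (fun h => mul_le_mul_of_nonneg_right (hYB ω h) hy)

lemma le_integral_mul_twoStepFun (hA : MeasurableSet A) (hB : MeasurableSet B) (hY : 0 ≤ Y)
    (hx : 0 ≤ x) (hy : 0 ≤ y) {N : ℝ} (hYA : ∀ ω ∈ A, N ≤ Y ω)
    (hint : Integrable (fun ω => Y ω * twoStepFun A B x y ω) P) :
    P.real A * (N * x) ≤ ∫ ω, Y ω * twoStepFun A B x y ω ∂P := by
  calc P.real A * (N * x) = ∫ ω, twoStepFun A B (N * x) 0 ω ∂P := by
        rw [integral_twoStepFun hA hB, mul_zero, add_zero]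
    _ ≤ ∫ ω, Y ω * twoStepFun A B x y ω ∂P := by
        refine integral_mono (integrable_twoStepFun hA hB) hint fun ω => ?_
        rw [mul_twoStepFun]
        exact twoStepFun_mono (fun h => mul_le_mul_of_nonneg_right (hYA ω h) hx)
          (fun _ => mul_nonneg (hY ω) hy)

lemma isDensity_twoStepFun (hA : MeasurableSet A) (hB : MeasurableSet B) (ha : P.real A ≠ 0)
    (hb : P.real B ≠ 0) {γ : ℝ} (hγ0 : 0 ≤ γ) (hγ1 : γ ≤ 1) :
    IsDensity P (twoStepFun A B ((1 - γ) / P.real A) (γ / P.real B)) := by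
  refine ⟨integrable_twoStepFun hA hB, ae_of_all _ fun _ => twoStepFun_nonneg ?_ ?_, ?_⟩
  · exact div_nonneg (sub_nonneg.2 hγ1) measureReal_nonneg
  · exact div_nonneg hγ0 measureReal_nonneg
  · rw [integral_twoStepFun hA hB]
    field_simp
    ring

lemma renyiFinite_twoStepFun (hA : MeasurableSet A) (hB : MeasurableSet B) (hAB : Disjoint A B)
    (hq : q ∈ Set.Ioo 0 1) : RenyiFinite P (twoStepFun A B x y) q := by
  refine ⟨fun h => absurd h hq.2.ne, fun _ _ => ?_, fun h => absurd h hq.1.not_gt⟩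
  rw [comp_twoStepFun hAB (φ := fun z => z ^ q) (Real.zero_rpow hq.1.ne')]
  exact integrable_twoStepFun hA hB

lemma le_integral_twoStepFun_rpow (hA : MeasurableSet A) (hB : MeasurableSet B)
    (hAB : Disjoint A B) (hq : q ∈ Set.Ioo 0 1) (hx : 0 ≤ x) {γ : ℝ} (hγ0 : 0 < γ)
    (hγB : γ ≤ P.real B) : γ ≤ ∫ ω, twoStepFun A B x (γ / P.real B) ω ^ q ∂P := by
  have hb : 0 < P.real B := hγ0.trans_le hγB
  rw [comp_twoStepFun hAB (φ := fun z => z ^ q) (Real.zero_rpow hq.1.ne'),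
    integral_twoStepFun hA hB]
  calc γ = P.real B * (γ / P.real B) := by field_simp
    _ ≤ P.real B * (γ / P.real B) ^ q := by
        gcongr
        exact Real.self_le_rpow_of_le_one (by positivity) ((div_le_one hb).2 hγB) hq.2.le
    _ ≤ P.real A * x ^ q + P.real B * (γ / P.real B) ^ q :=
        le_add_of_nonneg_left (mul_nonneg measureReal_nonneg (Real.rpow_nonneg hx q))

end TwoStepFunIntegral

lemma exists_isDensity_le_integral_mul [IsFiniteMeasure P] (hq : q ∈ Set.Ioo 0 1)
    (hYm : Measurable Y) (hY : 0 ≤ Y) {γ N M : ℝ} (hγ0 : 0 < γ) (hγ1 : γ ≤ 1)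
    (hB : γ ≤ P.real (Y ⁻¹' Set.Iic N)) (hA : 0 < P.real (Y ⁻¹' Set.Ioc N M)) :
    ∃ Z, IsDensity P Z ∧ RenyiFinite P Z q ∧ γ ≤ ∫ ω, Z ω ^ q ∂P ∧
      Integrable (fun ω => Y ω * Z ω) P ∧ (1 - γ) * N ≤ ∫ ω, Y ω * Z ω ∂P := by
  set A := Y ⁻¹' Set.Ioc N M
  set B := Y ⁻¹' Set.Iic N
  have hAm : MeasurableSet A := hYm measurableSet_Ioc
  have hBm : MeasurableSet B := hYm measurableSet_Iic
  have hAB : Disjoint A B := ((Set.Iic_disjoint_Ioc le_rfl).preimage Y).symm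
  have hx : 0 ≤ (1 - γ) / P.real A := div_nonneg (by linarith) hA.le
  have hy : 0 ≤ γ / P.real B := div_nonneg hγ0.le measureReal_nonneg
  set Z := twoStepFun A B ((1 - γ) / P.real A) (γ / P.real B)
  have hYZ : Integrable (fun ω => Y ω * Z ω) P := by
    refine integrable_mul_twoStepFun hAm hBm hYm.aestronglyMeasurable hx hy (x' := M) (y' := N)
      (fun ω hω => ?_) (fun ω hω => ?_) <;> rw [abs_of_nonneg (hY ω)]
    exacts [hω.2, hω]
  refine ⟨_, isDensity_twoStepFun hAm hBm hA.ne' (hγ0.trans_le hB).ne' hγ0.le hγ1,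
    renyiFinite_twoStepFun hAm hBm hAB hq, le_integral_twoStepFun_rpow hAm hBm hAB hq hx hγ0 hB,
    hYZ, ?_⟩
  calc (1 - γ) * N = P.real A * (N * ((1 - γ) / P.real A)) := by field_simp
    _ ≤ _ := le_integral_mul_twoStepFun hAm hBm hY hx hy (fun ω hω => hω.1.le) hYZ

lemma exists_measureReal_preimage_Ioc_pos [IsProbabilityMeasure P] (hY : AEMeasurable Y P)
    {N : ℝ} (hN : P.real (Y ⁻¹' Set.Iic N) < 1) : ∃ M, 0 < P.real (Y ⁻¹' Set.Ioc N M) := by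
  obtain ⟨M, hM⟩ := ((tendsto_measureReal_preimage_Iic_atTop hY).eventually (lt_mem_nhds hN)).exists
  refine ⟨M, ?_⟩
  have : P.real (Y ⁻¹' Set.Iic M) ≤ P.real (Y ⁻¹' Set.Iic N) + P.real (Y ⁻¹' Set.Ioc N M) :=
    (measureReal_mono (Set.preimage_mono Set.Iic_subset_Iic_union_Ioc)).trans
      (measureReal_union_le _ _)
  linarith

lemma EVaRd_eq_top_of_not_memLp_top [IsProbabilityMeasure P] (hα : α ∈ Set.Ioo 0 1)
    (hq : q ∈ Set.Ioo 0 1) (hYm : Measurable Y) (hY : 0 ≤ Y) (hub : ¬ MemLp Y ⊤ P) :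
    EVaRd P α q Y = ⊤ := by
  obtain ⟨hα0, hα1⟩ := hα
  set γ := (1 - α) ^ (1 - q)
  have hγ0 : 0 < γ := Real.rpow_pos_of_pos (by linarith) _
  have hγ1 : γ < 1 := Real.rpow_lt_one (by linarith) (by linarith) (by linarith [hq.2])
  rw [EVaRd, sSup_eq_top]
  intro _ hx
  obtain ⟨m, hxm, -⟩ := EReal.exists_between_coe_real hx
  obtain ⟨N, hγN, hmN⟩ : ∃ N, γ < P.real (Y ⁻¹' Set.Iic N) ∧ m < (1 - γ) * N :=
    (((tendsto_measureReal_preimage_Iic_atTop hYm.aemeasurable).eventually (lt_mem_nhds hγ1)).and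
      ((tendsto_id.const_mul_atTop (by linarith)).eventually_gt_atTop m)).exists
  obtain ⟨M, hM⟩ := exists_measureReal_preimage_Ioc_pos hYm.aemeasurable
    (measureReal_preimage_Iic_lt_one_of_not_memLp_top hYm.aestronglyMeasurable
      (ae_of_all _ hY) hub N)
  obtain ⟨Z, hZ, hZq, hZγ, hYZ, hlow⟩ :=
    exists_isDensity_le_integral_mul hq hYm hY hγ0 hγ1.le hγN.le hM
  refine ⟨_, ⟨Z, hZ, hZq, renyiEntropy_le_log_one_div hq.1.ne' hq.2 (by linarith) hZγ, hYZ, rfl⟩,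
    hxm.trans ?_⟩
  exact EReal.coe_lt_coe_iff.2 (hmN.trans_le hlow)

end

/-- for `α ∈ (0,1)`, `p < 0` and `Y ≥ 0`, `EVaR_α^p(Y) < ∞` if and only
if `Y` is essentially bounded; in particular `EVaR_α^p(Y) = ∞` for unbounded `Y`. -/
theorem evar_lt_top_iff (P : Measure Ω) [IsProbabilityMeasure P]
    (α p : ℝ) (hα : α ∈ Set.Ioo (0 : ℝ) 1) (hp : p < 0)
    (Y : Ω → ℝ) (hYm : AEStronglyMeasurable Y P) (hY : 0 ≤ᵐ[P] Y) :
    (EVaR P α p Y < ⊤ ↔ MemLp Y ⊤ P) ∧ (¬ MemLp Y ⊤ P → EVaR P α p Y = ⊤) := by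
  have hq : p / (p - 1) ∈ Set.Ioo 0 1 :=
    ⟨div_pos_of_neg_of_neg hp (by linarith), (div_lt_one_of_neg (by linarith)).2 (by linarith)⟩
  have hEVaR : EVaR P α p Y = EVaRd P α (p / (p - 1)) Y := if_neg (by linarith)
  obtain ⟨Y', hY'm, hY'0, hYY'⟩ := exists_measurable_nonneg_ae_eq hYm.aemeasurable hY
  have htop : ¬ MemLp Y ⊤ P → EVaR P α p Y = ⊤ := fun h => by
    rw [hEVaR, EVaRd_congr_ae hYY']
    exact EVaRd_eq_top_of_not_memLp_top hα hq hY'm hY'0 ((memLp_congr_ae hYY').not.1 h)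
  exact ⟨⟨fun hlt => by_contra fun h => hlt.ne (htop h),
    fun h => hEVaR ▸ EVaRd_lt_top_of_memLp_top h⟩, htop⟩

end
end

section
/- Let 0 < α' ≤ α < 1 and let Y ≥ 0 be a random variable on (Ω, 𝓕, P). If p > 1 and Y ∈ L^p(P), then EVaR_α^p(Y) ≤ ( ((1-α)/(1-α'))^{1/(p-1)} − (1/(1-α))^{1/(1-p)} )^{(1-p)/p} · EVaR_{α'}^p(Y). If p < 0 and Y is essentially bounded, then EVaR_α^p(Y) ≤ (1 − (1-α')^{-1/p})^{-1} · EVaR_{α'}^p(Y). -/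
/-! For `p > 1` the conjugate order `q = p/(p-1)` exceeds `1`, and the entropy constraint at
level `α` reads `E[Z^q] ≤ (1-α)^(1-q)`. A feasible density `Z` is lifted to `W = max(Z, ρ)/c`,
where `c` is the stated factor and `ρ ∈ [0, c]` is chosen by the intermediate value theorem so
that `E[W] = 1`. Then `E[W^q] ≤ (E[Z^q] + ρ^q)/c^q`, and `c` is exactly the constant for which
`(1-α)^(1-q) + c^q = (1-α')^(1-q) c^q`, so `W` is feasible at level `α'`; since `Y ≥ 0`,
`E[YZ] ≤ E[Y max(Z, ρ)] = c E[YW]`.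

For `p < 0` the order `q` lies in `(0,1)`, and the constraint at level `α'` becomes
`E[W^q] ≥ (1-α')^(1-q)`. The mixture `W = (1-t)Z + t` with `t = (1-α')^(-1/p)` satisfies it for
every density `Z` because `W ≥ t`, and `E[YZ] ≤ E[YW]/(1-t)`. -/

open MeasureTheory Real Filter

noncomputable section

variable {Ω : Type*} [MeasurableSpace Ω]

open Set

section Renyi

variable {P : Measure Ω} {Z : Ω → ℝ} {q β : ℝ}

lemma renyiEntropy_of_ne (hq0 : q ≠ 0) (hq1 : q ≠ 1) :
    renyiEntropy P Z q = (q - 1)⁻¹ * Real.log (∫ ω, Z ω ^ q ∂P) := by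
  rw [renyiEntropy, if_neg hq0, if_neg hq1]

lemma log_rpow_one_sub (hβ : 0 < β) (q : ℝ) :
    Real.log (β ^ (1 - q)) = (q - 1) * Real.log (1 / β) := by
  rw [Real.log_rpow hβ, one_div, Real.log_inv]
  ring

lemma integral_rpow_le_of_renyiEntropy_le (hq : 1 < q) (hβ : 0 < β)
    (h : renyiEntropy P Z q ≤ Real.log (1 / β)) : ∫ ω, Z ω ^ q ∂P ≤ β ^ (1 - q) := by
  rw [renyiEntropy_of_ne (by positivity) hq.ne', inv_mul_le_iff₀ (sub_pos.2 hq),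
    ← log_rpow_one_sub hβ] at h
  rcases le_or_gt (∫ ω, Z ω ^ q ∂P) 0 with hS | hS
  · exact hS.trans (Real.rpow_pos_of_pos hβ _).le
  · exact (Real.log_le_log_iff hS (Real.rpow_pos_of_pos hβ _)).1 h

lemma renyiEntropy_le_of_integral_rpow_le (hq : 1 < q) (hβ0 : 0 < β) (hβ1 : β ≤ 1)
    (hS : 0 ≤ ∫ ω, Z ω ^ q ∂P) (h : ∫ ω, Z ω ^ q ∂P ≤ β ^ (1 - q)) :
    renyiEntropy P Z q ≤ Real.log (1 / β) := by
  rw [renyiEntropy_of_ne (by positivity) hq.ne', inv_mul_le_iff₀ (sub_pos.2 hq),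
    ← log_rpow_one_sub hβ0]
  rcases hS.eq_or_lt with hS | hS
  · rw [← hS, Real.log_zero, log_rpow_one_sub hβ0]
    exact mul_nonneg (sub_pos.2 hq).le (Real.log_nonneg (one_le_one_div hβ0 hβ1))
  · exact Real.log_le_log hS h

lemma renyiEntropy_le_of_le_integral_rpow (hq0 : q ≠ 0) (hq1 : q < 1) (hβ : 0 < β)
    (h : β ^ (1 - q) ≤ ∫ ω, Z ω ^ q ∂P) : renyiEntropy P Z q ≤ Real.log (1 / β) := by
  rw [renyiEntropy_of_ne hq0 hq1.ne, inv_mul_eq_div, div_le_iff_of_neg' (sub_neg.2 hq1),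
    ← log_rpow_one_sub hβ]
  exact Real.log_le_log (Real.rpow_pos_of_pos hβ _) h

lemma renyiFinite_of_integrable_rpow (hq0 : 0 < q) (hq1 : q ≠ 1)
    (h : Integrable (fun ω => Z ω ^ q) P) : RenyiFinite P Z q :=
  ⟨fun h1 => absurd h1 hq1, fun _ _ => h, fun hneg => absurd hneg hq0.not_gt⟩

end Renyi

lemma abs_max_le_abs_add_abs (a b : ℝ) : |max a b| ≤ |a| + |b| :=
  abs_max_le_max_abs_abs.trans (max_le_add_of_nonneg (abs_nonneg _) (abs_nonneg _))

namespace IsDensity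

variable {P : Measure Ω} [IsProbabilityMeasure P] {Z : Ω → ℝ}

lemma mix_const (hZ : IsDensity P Z) {t : ℝ} (ht0 : 0 ≤ t) (ht1 : t ≤ 1) :
    IsDensity P (fun ω => (1 - t) * Z ω + t) := by
  obtain ⟨hZi, hZ0, hZ1⟩ := hZ
  refine ⟨(hZi.const_mul _).add (integrable_const t), ?_, ?_⟩
  · filter_upwards [hZ0] with ω hω
    exact add_nonneg (mul_nonneg (sub_nonneg.2 ht1) hω) ht0
  · rw [integral_add (hZi.const_mul _) (integrable_const t), integral_const_mul, hZ1,
      integral_const, probReal_univ, one_smul]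
    ring

lemma exists_max_div (hZ : IsDensity P Z) {c : ℝ} (hc : 1 ≤ c) :
    ∃ ρ ∈ Icc 0 c, IsDensity P (fun ω => max (Z ω) ρ / c) := by
  obtain ⟨hZi, hZ0, hZ1⟩ := hZ
  have hmax (ρ : ℝ) : Integrable (fun ω => max (Z ω) ρ) P := hZi.sup (integrable_const ρ)
  have hcont : ContinuousOn (fun ρ => ∫ ω, max (Z ω) ρ ∂P) (Icc 0 c) := by
    refine continuousOn_of_dominated (bound := fun ω => |Z ω| + c)
      (fun ρ _ => (hmax ρ).aestronglyMeasurable) (fun ρ hρ => ?_)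
      (hZi.abs.add (integrable_const c))
      (Eventually.of_forall fun ω => (continuous_const.max continuous_id).continuousOn)
    refine Eventually.of_forall fun ω => ?_
    calc ‖max (Z ω) ρ‖ ≤ |Z ω| + |ρ| := abs_max_le_abs_add_abs _ _
      _ ≤ |Z ω| + c := by rw [abs_of_nonneg hρ.1]; linarith [hρ.2]
  have hleft : ∫ ω, max (Z ω) 0 ∂P ≤ c := by
    have hZmax : (fun ω => max (Z ω) 0) =ᵐ[P] Z := by
      filter_upwards [hZ0] with ω hω
      exact max_eq_left hω
    rwa [integral_congr_ae hZmax, hZ1]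
  have hright : c ≤ ∫ ω, max (Z ω) c ∂P := by
    calc c = ∫ _ω, c ∂P := by simp
      _ ≤ ∫ ω, max (Z ω) c ∂P :=
        integral_mono (integrable_const c) (hmax c) fun ω => le_max_right _ _
  obtain ⟨ρ, hρ, hρc⟩ := intermediate_value_Icc (by linarith) hcont ⟨hleft, hright⟩
  have hc0 : 0 < c := by linarith
  refine ⟨ρ, hρ, (hmax ρ).div_const c,
    Eventually.of_forall fun ω => div_nonneg (hρ.1.trans (le_max_right _ _)) hc0.le, ?_⟩
  dsimp only at hρc
  rw [integral_div, hρc, div_self hc0.ne']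

end IsDensity

section Integrability

variable {P : Measure Ω}

lemma integrable_rpow_of_le_one [IsFiniteMeasure P] {Z : Ω → ℝ} {q : ℝ} (hZ : Integrable Z P)
    (hZ0 : 0 ≤ᵐ[P] Z) (hq0 : 0 ≤ q) (hq1 : q ≤ 1) : Integrable (fun ω => Z ω ^ q) P := by
  have hLq : MemLp Z (ENNReal.ofReal q) P :=
    (memLp_one_iff_integrable.2 hZ).mono_exponent (ENNReal.ofReal_le_one.2 hq1)
  refine hLq.integrable_norm_rpow'.congr ?_
  filter_upwards [hZ0] with ω hω
  rw [Real.norm_eq_abs, abs_of_nonneg hω, ENNReal.toReal_ofReal hq0]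

lemma integrable_mul_max {Y Z : Ω → ℝ} (hY : Integrable Y P) (hZ : AEStronglyMeasurable Z P)
    (hYZ : Integrable (fun ω => Y ω * Z ω) P) (ρ : ℝ) :
    Integrable (fun ω => Y ω * max (Z ω) ρ) P := by
  refine Integrable.mono' (hYZ.abs.add (hY.abs.const_mul |ρ|))
    (hY.aestronglyMeasurable.mul (hZ.sup aestronglyMeasurable_const))
    (Eventually.of_forall fun ω => ?_)
  simp only [Pi.add_apply, Real.norm_eq_abs, abs_mul]
  rw [mul_comm |ρ|, ← mul_add]
  exact mul_le_mul_of_nonneg_left (abs_max_le_abs_add_abs _ _) (abs_nonneg _)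

lemma rpow_max_ae_eq {Z : Ω → ℝ} {q ρ : ℝ} (hZ0 : 0 ≤ᵐ[P] Z) (hq : 0 ≤ q) (hρ : 0 ≤ ρ) :
    (fun ω => max (Z ω) ρ ^ q) =ᵐ[P] fun ω => max (Z ω ^ q) (ρ ^ q) := by
  filter_upwards [hZ0] with ω hω
  exact Real.rpow_max hω hρ hq

lemma integrable_rpow_max [IsFiniteMeasure P] {Z : Ω → ℝ} {q ρ : ℝ} (hZ0 : 0 ≤ᵐ[P] Z)
    (hZq : Integrable (fun ω => Z ω ^ q) P) (hq : 0 ≤ q) (hρ : 0 ≤ ρ) :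
    Integrable (fun ω => max (Z ω) ρ ^ q) P :=
  (hZq.sup (integrable_const _)).congr (rpow_max_ae_eq hZ0 hq hρ).symm

lemma integral_rpow_max_le [IsProbabilityMeasure P] {Z : Ω → ℝ} {q ρ : ℝ} (hZ0 : 0 ≤ᵐ[P] Z)
    (hZq : Integrable (fun ω => Z ω ^ q) P) (hq : 0 ≤ q) (hρ : 0 ≤ ρ) :
    ∫ ω, max (Z ω) ρ ^ q ∂P ≤ ∫ ω, Z ω ^ q ∂P + ρ ^ q := by
  calc ∫ ω, max (Z ω) ρ ^ q ∂P = ∫ ω, max (Z ω ^ q) (ρ ^ q) ∂P :=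
        integral_congr_ae (rpow_max_ae_eq hZ0 hq hρ)
    _ ≤ ∫ ω, (Z ω ^ q + ρ ^ q) ∂P := by
      refine integral_mono_ae (hZq.sup (integrable_const _)) (hZq.add (integrable_const _)) ?_
      filter_upwards [hZ0] with ω hω
      exact max_le_add_of_nonneg (Real.rpow_nonneg hω q) (Real.rpow_nonneg hρ q)
    _ = ∫ ω, Z ω ^ q ∂P + ρ ^ q := by
      rw [integral_add hZq (integrable_const _), integral_const, probReal_univ, one_smul]

end Integrability

section Exponents

variable {p : ℝ}

lemma one_sub_div_sub_one (hp : p ≠ 1) : 1 - p / (p - 1) = -(1 / (p - 1)) := by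
  field_simp [sub_ne_zero.2 hp]
  ring

lemma one_lt_div_sub_one (hp : 1 < p) : 1 < p / (p - 1) := by
  rw [one_lt_div (sub_pos.2 hp)]
  linarith

lemma div_sub_one_mem_Ioo (hp : p < 0) : p / (p - 1) ∈ Ioo 0 1 :=
  ⟨div_pos_of_neg_of_neg hp (by linarith), (div_lt_one_of_neg (by linarith)).2 (by linarith)⟩

lemma levelFactor_spec {β β' c : ℝ} (hp : 1 < p) (hβ : 0 < β) (hββ' : β ≤ β') (hβ' : β' < 1)
    (hc : c = ((β / β') ^ (1 / (p - 1)) - (1 / β) ^ (1 / (1 - p))) ^ ((1 - p) / p)) :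
    1 ≤ c ∧ β ^ (1 - p / (p - 1)) + c ^ (p / (p - 1)) =
      β' ^ (1 - p / (p - 1)) * c ^ (p / (p - 1)) := by
  have hs : 0 < 1 / (p - 1) := one_div_pos.2 (sub_pos.2 hp)
  set A := β ^ (1 / (p - 1))
  set B := β' ^ (1 / (p - 1))
  have hA : 0 < A := Real.rpow_pos_of_pos hβ _
  have hB : 0 < B := Real.rpow_pos_of_pos (hβ.trans_le hββ') _
  have hB1 : B < 1 := Real.rpow_lt_one (hβ.le.trans hββ') hβ' hs
  have hAB : A ≤ B := Real.rpow_le_rpow hβ.le hββ' hs.le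
  have hI : (β / β') ^ (1 / (p - 1)) - (1 / β) ^ (1 / (1 - p)) = A / B - A := by
    rw [Real.div_rpow hβ.le (hβ.le.trans hββ'), one_div β, Real.inv_rpow hβ.le,
      ← Real.rpow_neg hβ.le, ← div_neg, neg_sub]
  have hI0 : 0 < A / B - A := by
    rw [sub_pos, lt_div_iff₀ hB]
    exact mul_lt_of_lt_one_right hA hB1
  have hI1 : A / B - A ≤ 1 := by
    linarith [(div_le_one hB).2 hAB]
  have hcq : c ^ (p / (p - 1)) = (A / B - A)⁻¹ := by
    rw [hc, hI, ← Real.rpow_mul hI0.le,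
      show (1 - p) / p * (p / (p - 1)) = -1 by field_simp [(sub_pos.2 hp).ne']; ring,
      Real.rpow_neg_one]
  refine ⟨hc ▸ hI ▸ Real.one_le_rpow_of_pos_of_le_one_of_nonpos hI0 hI1
    (div_nonpos_of_nonpos_of_nonneg (by linarith) (by linarith)), ?_⟩
  rw [hcq, one_sub_div_sub_one hp.ne', Real.rpow_neg hβ.le,
    Real.rpow_neg (hβ.le.trans hββ')]
  change A⁻¹ + (A / B - A)⁻¹ = B⁻¹ * (A / B - A)⁻¹
  clear_value A B
  have : 1 - B ≠ 0 := (sub_pos.2 hB1).ne'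
  field_simp
  ring

lemma neg_inv_rpow_spec {β : ℝ} (hp : p < 0) (hβ0 : 0 < β) (hβ1 : β < 1) :
    0 < β ^ (-(1 / p)) ∧ β ^ (-(1 / p)) < 1 ∧
      (β ^ (-(1 / p))) ^ (p / (p - 1)) = β ^ (1 - p / (p - 1)) := by
  refine ⟨Real.rpow_pos_of_pos hβ0 _,
    Real.rpow_lt_one hβ0.le hβ1 (neg_pos.2 (one_div_neg.2 hp)), ?_⟩
  rw [← Real.rpow_mul hβ0.le, one_sub_div_sub_one (by linarith)]
  congr 1
  field_simp [hp.ne]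

end Exponents

section Comparison

variable {P : Measure Ω} {Y : Ω → ℝ} {α α' q : ℝ}

lemma EVaRd_le_mul_of_forall_exists {c : ℝ} (hc : 0 ≤ c)
    (h : ∀ Z : Ω → ℝ, IsDensity P Z → RenyiFinite P Z q →
      renyiEntropy P Z q ≤ Real.log (1 / (1 - α)) →
      Integrable (fun ω => Y ω * Z ω) P →
      ∃ W : Ω → ℝ, IsDensity P W ∧ RenyiFinite P W q ∧
        renyiEntropy P W q ≤ Real.log (1 / (1 - α')) ∧
        Integrable (fun ω => Y ω * W ω) P ∧
        ∫ ω, Y ω * Z ω ∂P ≤ c * ∫ ω, Y ω * W ω ∂P) :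
    EVaRd P α q Y ≤ (c : EReal) * EVaRd P α' q Y := by
  refine sSup_le ?_
  rintro _ ⟨Z, hZ, hZfin, hZH, hYZ, rfl⟩
  obtain ⟨W, hW, hWfin, hWH, hYW, hle⟩ := h Z hZ hZfin hZH hYZ
  calc ((∫ ω, Y ω * Z ω ∂P : ℝ) : EReal)
      ≤ (c : EReal) * ((∫ ω, Y ω * W ω ∂P : ℝ) : EReal) := by
        rw [← EReal.coe_mul]; exact_mod_cast hle
    _ ≤ (c : EReal) * EVaRd P α' q Y :=
        mul_le_mul_of_nonneg_left (le_sSup ⟨W, hW, hWfin, hWH, hYW, rfl⟩) (mod_cast hc)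

variable [IsProbabilityMeasure P]

theorem EVaRd_le_mul_of_one_lt (hq : 1 < q) (hα : α < 1) (hα'0 : 0 ≤ α') (hα'1 : α' < 1)
    {c : ℝ} (hc : 1 ≤ c) (hfactor : (1 - α) ^ (1 - q) + c ^ q ≤ (1 - α') ^ (1 - q) * c ^ q)
    (hY : 0 ≤ᵐ[P] Y) (hYi : Integrable Y P) :
    EVaRd P α q Y ≤ (c : EReal) * EVaRd P α' q Y := by
  have hc0 : 0 < c := by linarith
  refine EVaRd_le_mul_of_forall_exists hc0.le fun Z hZ hZfin hZH hYZ => ?_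
  obtain ⟨ρ, hρ, hW⟩ := hZ.exists_max_div hc
  have hV0 (ω : Ω) : 0 ≤ max (Z ω) ρ := hρ.1.trans (le_max_right _ _)
  have hZq : Integrable (fun ω => Z ω ^ q) P := hZfin.2.1 (by positivity) hq.ne'
  have hWq : (fun ω => (max (Z ω) ρ / c) ^ q) = fun ω => max (Z ω) ρ ^ q / c ^ q := by
    funext ω
    exact Real.div_rpow (hV0 ω) hc0.le q
  have hmoment : ∫ ω, (max (Z ω) ρ / c) ^ q ∂P ≤ (1 - α') ^ (1 - q) := by
    rw [hWq, integral_div, div_le_iff₀ (Real.rpow_pos_of_pos hc0 q)]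
    calc ∫ ω, max (Z ω) ρ ^ q ∂P ≤ ∫ ω, Z ω ^ q ∂P + ρ ^ q :=
          integral_rpow_max_le hZ.2.1 hZq (by positivity) hρ.1
      _ ≤ (1 - α) ^ (1 - q) + c ^ q :=
        add_le_add (integral_rpow_le_of_renyiEntropy_le hq (by linarith) hZH)
          (Real.rpow_le_rpow hρ.1 hρ.2 (by positivity))
      _ ≤ (1 - α') ^ (1 - q) * c ^ q := hfactor
  have hYW : (fun ω => Y ω * (max (Z ω) ρ / c)) = fun ω => Y ω * max (Z ω) ρ / c := by
    funext ω
    exact (mul_div_assoc _ _ _).symm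
  have hYV := integrable_mul_max hYi hZ.1.aestronglyMeasurable hYZ ρ
  refine ⟨_, hW, renyiFinite_of_integrable_rpow (by positivity) hq.ne'
      (hWq ▸ (integrable_rpow_max hZ.2.1 hZq (by positivity) hρ.1).div_const _),
    renyiEntropy_le_of_integral_rpow_le hq (by linarith) (by linarith)
      (integral_nonneg fun ω => Real.rpow_nonneg (div_nonneg (hV0 ω) hc0.le) q) hmoment,
    hYW ▸ hYV.div_const c, ?_⟩
  rw [hYW, integral_div, mul_div_cancel₀ _ hc0.ne']
  refine integral_mono_ae hYZ hYV ?_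
  filter_upwards [hY] with ω hω
  exact mul_le_mul_of_nonneg_left (le_max_left _ _) hω

theorem EVaRd_le_mul_of_lt_one (hq0 : 0 < q) (hq1 : q < 1) (hα' : α' < 1) {t : ℝ}
    (ht0 : 0 < t) (ht1 : t < 1) (ht : (1 - α') ^ (1 - q) ≤ t ^ q)
    (hY : 0 ≤ᵐ[P] Y) (hYi : Integrable Y P) :
    EVaRd P α q Y ≤ (((1 - t)⁻¹ : ℝ) : EReal) * EVaRd P α' q Y := by
  have hs : 0 < 1 - t := sub_pos.2 ht1
  refine EVaRd_le_mul_of_forall_exists (inv_nonneg.2 hs.le) fun Z hZ _ _ hYZ => ?_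
  have hW := hZ.mix_const ht0.le ht1.le
  have hWq := integrable_rpow_of_le_one hW.1 hW.2.1 hq0.le hq1.le
  have hmoment : (1 - α') ^ (1 - q) ≤ ∫ ω, ((1 - t) * Z ω + t) ^ q ∂P := by
    calc (1 - α') ^ (1 - q) ≤ t ^ q := ht
      _ = ∫ _ω, t ^ q ∂P := by simp
      _ ≤ ∫ ω, ((1 - t) * Z ω + t) ^ q ∂P := by
        refine integral_mono_ae (integrable_const _) hWq ?_
        filter_upwards [hZ.2.1] with ω hω
        exact Real.rpow_le_rpow ht0.le (le_add_of_nonneg_left (mul_nonneg hs.le hω)) hq0.le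
  have hYW : (fun ω => Y ω * ((1 - t) * Z ω + t)) =
      fun ω => (1 - t) * (Y ω * Z ω) + t * Y ω := by
    funext ω
    ring
  refine ⟨_, hW, renyiFinite_of_integrable_rpow hq0 hq1.ne hWq,
    renyiEntropy_le_of_le_integral_rpow hq0.ne' hq1 (by linarith) hmoment,
    hYW ▸ (hYZ.const_mul _).add (hYi.const_mul t), ?_⟩
  rw [hYW, integral_add (hYZ.const_mul _) (hYi.const_mul t), integral_const_mul,
    integral_const_mul, mul_add, inv_mul_cancel_left₀ hs.ne']
  exact le_add_of_nonneg_right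
    (mul_nonneg (inv_nonneg.2 hs.le) (mul_nonneg ht0.le (integral_nonneg_of_ae hY)))

end Comparison

/-- comparison of the Entropic Value-at-Risk for different confidence
levels `0 < α' ≤ α < 1`, for nonnegative `Y`. -/
theorem evar_level_compare (P : Measure Ω) [IsProbabilityMeasure P]
    (α α' p : ℝ) (h0 : 0 < α') (h1 : α' ≤ α) (h2 : α < 1)
    (Y : Ω → ℝ) (hY : 0 ≤ᵐ[P] Y) :
    (1 < p → MemLp Y (ENNReal.ofReal p) P →
      EVaR P α p Y ≤
        (((((1 - α) / (1 - α')) ^ (1 / (p - 1)) - (1 / (1 - α)) ^ (1 / (1 - p))) ^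
            ((1 - p) / p) : ℝ) : EReal) * EVaR P α' p Y) ∧
    (p < 0 → MemLp Y ⊤ P →
      EVaR P α p Y ≤
        (((1 - (1 - α') ^ (-(1 / p)))⁻¹ : ℝ) : EReal) * EVaR P α' p Y) := by
  refine ⟨fun hp hYp => ?_, fun hp hYp => ?_⟩
  · obtain ⟨hc, hfactor⟩ :=
      levelFactor_spec (β' := 1 - α') hp (sub_pos.2 h2) (by linarith) (by linarith) rfl
    rw [EVaR, EVaR, if_neg hp.ne', if_neg hp.ne']
    exact EVaRd_le_mul_of_one_lt (one_lt_div_sub_one hp) h2 h0.le (h1.trans_lt h2) hc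
      hfactor.le hY (hYp.integrable (ENNReal.one_le_ofReal.2 hp.le))
  · obtain ⟨ht0, ht1, ht⟩ := neg_inv_rpow_spec hp (by linarith : 0 < 1 - α') (by linarith)
    obtain ⟨hq0, hq1⟩ := div_sub_one_mem_Ioo hp
    rw [EVaR, EVaR, if_neg (by linarith), if_neg (by linarith)]
    exact EVaRd_le_mul_of_lt_one hq0 hq1 (h1.trans_lt h2) ht0 ht1 ht.ge hY
      (hYp.integrable le_top)

end
end
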